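/- Let τ > 0, h⁺, h⁻ > 0, Δx ∈ ℝ, and let u, u₊, u₋, û > 0. Define w = −2·ln u, w₊ = −2·ln u₊, w₋ = −2·ln u₋, ŵ = −2·ln û, and set w_x = (w₊ − w)/h⁺, w_x̄ = (w − w₋)/h⁻, w_{xx̄} = (2/(h⁺+h⁻))·(w_x − w_x̄). Then: (i) the mesh equation Δx = (2τ/(h⁺+h⁻))·(−(h⁻/h⁺)ln(u₊/u) + (h⁺/h⁻)ln(u₋/u)) holds if and only if Δx = τ·(h⁻·w_x + h⁺·w_x̄)/(h⁺+h⁻); and (ii) the equation (u/û)²·exp(−Δx²/(2τ)) = 1 − (4τ/(h⁺+h⁻))·((1/h⁺)ln(u₊/u) + (1/h⁻)ln(u₋/u)) holds if and only if exp(ŵ − w − Δx²/(2τ)) = 1 + τ·w_{xx̄}. Hence the Hopf substitution w = −2 ln u transforms the invariant difference model for the heat equation into the invariant difference model for the potential Burgers equation w_t + w_x²/2 = w_xx, exactly as in the continuous case. -/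
import Mathlib


open Real

/-- The Hopf substitution `w = −2 ln u` transforms the invariant difference
model for the heat equation `u_t = u_xx` into the invariant difference model
for the potential Burgers equation `w_t + w_x²/2 = w_xx`:
(i) the mesh equation of the heat model is equivalent to
`Δx = τ(h⁻w_x + h⁺w_x̄)/(h⁺+h⁻)`, and (ii) the evolution equation of the heat
model is equivalent to `exp(ŵ − w − Δx²/(2τ)) = 1 + τ·w_{xx̄}`, where
`w_x = (w₊−w)/h⁺`, `w_x̄ = (w−w₋)/h⁻`, `w_{xx̄} = (2/(h⁺+h⁻))(w_x − w_x̄)`. -/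
theorem hopf_transformation_of_invariant_heat_scheme
    (τ hp hm Δx : ℝ) (hτ : 0 < τ) (hhp : 0 < hp) (hhm : 0 < hm)
    (u up um uh : ℝ) (hu : 0 < u) (hup : 0 < up) (hum : 0 < um) (huh : 0 < uh)
    (w wp wm wh wx wxbar wxxbar : ℝ)
    (hw : w = -2 * Real.log u) (hwp : wp = -2 * Real.log up)
    (hwm : wm = -2 * Real.log um) (hwh : wh = -2 * Real.log uh)
    (hwx : wx = (wp - w) / hp) (hwxbar : wxbar = (w - wm) / hm)
    (hwxxbar : wxxbar = (2 / (hp + hm)) * (wx - wxbar)) :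
    ((Δx = (2 * τ / (hp + hm))
        * (-(hm / hp) * Real.log (up / u) + (hp / hm) * Real.log (um / u)))
      ↔ Δx = τ * (hm * wx + hp * wxbar) / (hp + hm)) ∧
    (((u / uh) ^ 2 * Real.exp (-(Δx ^ 2) / (2 * τ))
        = 1 - (4 * τ / (hp + hm))
            * ((1 / hp) * Real.log (up / u) + (1 / hm) * Real.log (um / u)))
      ↔ Real.exp (wh - w - Δx ^ 2 / (2 * τ)) = 1 + τ * wxxbar) := by
  have hpm : hp + hm ≠ 0 := by positivity
  subst hwxxbar hwx hwxbar hw hwp hwm hwh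
  rw [Real.log_div hup.ne' hu.ne', Real.log_div hum.ne' hu.ne']
  constructor
  · constructor <;> intro h <;> rw [h] <;> field_simp <;> ring
  · have h1 : (u / uh) ^ 2 * Real.exp (-(Δx ^ 2) / (2 * τ))
        = Real.exp (-2 * Real.log uh - -2 * Real.log u - Δx ^ 2 / (2 * τ)) := by
      have : (u / uh) ^ 2 = Real.exp (-2 * Real.log uh - -2 * Real.log u) := by
        rw [div_pow, ← Real.exp_log (by positivity : (0:ℝ) < u ^ 2 / uh ^ 2),
          Real.log_div (by positivity) (by positivity), Real.log_pow, Real.log_pow]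
        push_cast; ring_nf
      rw [this, ← Real.exp_add]; ring_nf
    have h2 : 1 - 4 * τ / (hp + hm)
          * (1 / hp * (Real.log up - Real.log u) + 1 / hm * (Real.log um - Real.log u))
        = 1 + τ * (2 / (hp + hm) * ((-2 * Real.log up - -2 * Real.log u) / hp
            - (-2 * Real.log u - -2 * Real.log um) / hm)) := by
      field_simp; ring
    rw [h1, h2]
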